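/- Let T be a proper infinite rooted tree with weight σ and let η ∈ Λ. Then: (i) for every p ∈ (1,∞) with Hölder conjugate q, Mod_{p,σ}(Γ_∞) ≥ (Σ_e σ(e)^{-q/p} η(e)^q)^{-p/q}; (ii) Mod_{1,σ}(Γ_∞) ≥ (sup_e σ(e)^{-1}η(e))^{-1}; (iii) Mod_{∞,σ}(Γ_∞) ≥ (Σ_e σ(e)^{-1}η(e))^{-1}. Here the sums and suprema are over all edges and taken in [0,∞], with the reciprocal of ∞ interpreted as 0. -/

import Mathlib

open scoped ENNReal NNReal

/-- A proper infinite rooted tree, modeled as a prefix-closed set of finite lists of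
naturals in which every node has at least one and finitely many children. -/
structure PTree where
  mem : List ℕ → Prop
  root_mem : mem []
  prefix_closed : ∀ ⦃l₁ l₂ : List ℕ⦄, l₁ <+: l₂ → mem l₂ → mem l₁
  child_exists : ∀ ⦃l⦄, mem l → ∃ a, mem (l ++ [a])
  finite_children : ∀ ⦃l⦄, mem l → {a : ℕ | mem (l ++ [a])}.Finite

/-- The initial segment of length `n` of `f : ℕ → ℕ`, as a list. -/
def seg (f : ℕ → ℕ) (n : ℕ) : List ℕ := (List.range n).map f

namespace PTree

variable (T : PTree)

/-- The edges of the tree: the nonempty lists in `T`. -/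
def Edge : Type := {e : List ℕ // T.mem e ∧ e ≠ []}

/-- The family `Γ_∞` of infinite descending paths: functions all of whose
finite initial segments lie in `T`. -/
def GammaInf : Set (ℕ → ℕ) := {f | ∀ n, T.mem (seg f n)}

/-- `ρ`-length of the infinite descending path determined by `f`: the sum of `ρ`
over the nonempty initial segments of `f`. -/
noncomputable def lenInf (ρ : List ℕ → ℝ≥0) (f : ℕ → ℕ) : ℝ≥0∞ :=
  ∑' n : ℕ, (ρ (seg f (n + 1)) : ℝ≥0∞)

/-- `ρ`-length of the finite descending path `γ_e` consisting of the nonempty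
prefixes of the edge `e`. -/
noncomputable def lenFin (ρ : List ℕ → ℝ≥0) (e : List ℕ) : ℝ≥0∞ :=
  ∑ k ∈ Finset.range e.length, (ρ (e.take (k + 1)) : ℝ≥0∞)

/-- Admissible densities for the family `Γ_n` (identified with the shell `S_n`). -/
def AdmFin (n : ℕ) : Set (List ℕ → ℝ≥0) :=
  {ρ | ∀ e : List ℕ, T.mem e → e.length = n → 1 ≤ lenFin ρ e}

/-- Admissible densities for the family `Γ_∞`. -/
def AdmInf : Set (List ℕ → ℝ≥0) :=
  {ρ | ∀ f ∈ T.GammaInf, 1 ≤ lenInf ρ f}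

/-- The `p`-energy of a density `ρ` with respect to the weight `σ`. -/
noncomputable def energy (p : ℝ) (σ ρ : List ℕ → ℝ≥0) : ℝ≥0∞ :=
  ∑' e : T.Edge, (σ e.1 : ℝ≥0∞) * (ρ e.1 : ℝ≥0∞) ^ p

/-- The `∞`-energy of a density `ρ` with respect to the weight `σ`. -/
noncomputable def energyTop (σ ρ : List ℕ → ℝ≥0) : ℝ≥0∞ :=
  ⨆ e : T.Edge, (σ e.1 : ℝ≥0∞) * (ρ e.1 : ℝ≥0∞)

/-- The `p`-modulus of the family `Γ_n`. -/
noncomputable def ModFin (p : ℝ) (σ : List ℕ → ℝ≥0) (n : ℕ) : ℝ≥0∞ :=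
  ⨅ ρ ∈ T.AdmFin n, T.energy p σ ρ

/-- The `p`-modulus of the family `Γ_∞`. -/
noncomputable def ModInf (p : ℝ) (σ : List ℕ → ℝ≥0) : ℝ≥0∞ :=
  ⨅ ρ ∈ T.AdmInf, T.energy p σ ρ

/-- The `∞`-modulus of the family `Γ_∞`. -/
noncomputable def ModTop (σ : List ℕ → ℝ≥0) : ℝ≥0∞ :=
  ⨅ ρ ∈ T.AdmInf, T.energyTop σ ρ

end PTree

namespace PTree

variable (T : PTree)

/-- The set `Λ` of unit flows from the root: nonnegative functions on edges whose
values on the first shell sum to `1` and whose value on each edge equals the sum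
of the values on its children. -/
def Lambda : Set (List ℕ → ℝ≥0) :=
  {η | (∑' e : {l : List ℕ // T.mem l ∧ l.length = 1}, (η e.1 : ℝ≥0∞)) = 1 ∧
    ∀ e : List ℕ, T.mem e → e ≠ [] →
      (∑' a : {a : ℕ // T.mem (e ++ [a])}, (η (e ++ [a.1]) : ℝ≥0∞)) = (η e : ℝ≥0∞)}

end PTree

/-! Every density admissible for `Γ_∞` pairs with every unit flow `η ∈ Λ` to at least `1`.
Indeed, by Kőnig's lemma only finitely many nodes have `ρ`-length `< c` for a given `c < 1`,
so some shell `S_{n+1}` consists of nodes of `ρ`-length `≥ c`; flow conservation rewrites the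
`η`-average of these lengths as a partial sum of `∑ η ρ`, which is therefore `≥ c`.
The three bounds follow from `1 ≤ ∑ η ρ` by writing `η ρ = (σ^{1/p} ρ) (σ^{-1/p} η)` and
applying Hölder's inequality, respectively by pulling out the supremum of one factor. -/

namespace ENNReal

theorem inv_le_of_one_le_mul {a b : ℝ≥0∞} (h : 1 ≤ a * b) : a⁻¹ ≤ b :=
  (ENNReal.inv_le_iff_le_mul (fun _ ha => by simp [ha] at h) fun _ hb => by simp [hb] at h).2 h

theorem mul_eq_mul_mul_inv_mul {a : ℝ≥0∞} (h0 : a ≠ 0) (htop : a ≠ ∞) (x y : ℝ≥0∞) :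
    x * y = a * y * (a⁻¹ * x) := by
  rw [mul_mul_mul_comm, ENNReal.mul_inv_cancel h0 htop, one_mul, mul_comm]

theorem tsum_mul_le_Lp_mul_Lq {ι : Type*} (f g : ι → ℝ≥0∞) {p q : ℝ}
    (hpq : p.HolderConjugate q) :
    ∑' i, f i * g i ≤ (∑' i, f i ^ p) ^ (1 / p) * (∑' i, g i ^ q) ^ (1 / q) := by
  let : MeasurableSpace ι := ⊤
  have : MeasurableSingletonClass ι := ⟨fun _ => trivial⟩
  have hmeas (h : ι → ℝ≥0∞) : AEMeasurable h .count := measurable_from_top.aemeasurable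
  simpa [MeasureTheory.lintegral_count] using
    ENNReal.lintegral_mul_le_Lp_mul_Lq .count hpq (hmeas f) (hmeas g)

theorem rpow_neg_le_of_one_le_rpow_mul_rpow {p q : ℝ} (hpq : p.HolderConjugate q)
    {a b : ℝ≥0∞} (h : 1 ≤ a ^ (1 / p) * b ^ (1 / q)) : b ^ (-(p / q)) ≤ a := by
  rw [ENNReal.rpow_neg]
  refine inv_le_of_one_le_mul ?_
  calc (1 : ℝ≥0∞) = 1 ^ p := (ENNReal.one_rpow p).symm
    _ ≤ (a ^ (1 / p) * b ^ (1 / q)) ^ p := ENNReal.rpow_le_rpow h hpq.nonneg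
    _ = b ^ (p / q) * a := by
      rw [ENNReal.mul_rpow_of_nonneg _ _ hpq.nonneg, ← ENNReal.rpow_mul, ← ENNReal.rpow_mul,
        one_div_mul_cancel hpq.ne_zero, ENNReal.rpow_one, mul_comm, one_div_mul_eq_div]

end ENNReal

theorem seg_succ (f : ℕ → ℕ) (n : ℕ) : seg f (n + 1) = seg f n ++ [f n] := by
  simp [seg, List.range_succ]

namespace PTree

theorem lenFin_nil (ρ : List ℕ → ℝ≥0) : lenFin ρ [] = 0 := by
  simp [lenFin]

theorem lenFin_mono (ρ : List ℕ → ℝ≥0) {l l' : List ℕ} (h : l <+: l') :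
    lenFin ρ l ≤ lenFin ρ l' := by
  obtain ⟨t, rfl⟩ := h
  unfold lenFin
  calc ∑ k ∈ Finset.range l.length, (ρ (l.take (k + 1)) : ℝ≥0∞)
      = ∑ k ∈ Finset.range l.length, (ρ ((l ++ t).take (k + 1)) : ℝ≥0∞) := by
        refine Finset.sum_congr rfl fun k hk => ?_
        rw [List.take_append_of_le_length (Finset.mem_range.1 hk)]
    _ ≤ _ := Finset.sum_le_sum_of_subset (Finset.range_subset_range.2 (by simp))

theorem lenFin_concat (ρ : List ℕ → ℝ≥0) (l : List ℕ) (a : ℕ) :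
    lenFin ρ (l ++ [a]) = lenFin ρ l + ρ (l ++ [a]) := by
  unfold lenFin
  rw [List.length_append, List.length_singleton, Finset.sum_range_succ, List.take_of_length_le
    (by simp)]
  congr 1
  refine Finset.sum_congr rfl fun k hk => ?_
  rw [List.take_append_of_le_length (Finset.mem_range.1 hk)]

theorem lenFin_seg (ρ : List ℕ → ℝ≥0) (f : ℕ → ℕ) (n : ℕ) :
    lenFin ρ (seg f n) = ∑ k ∈ Finset.range n, (ρ (seg f (k + 1)) : ℝ≥0∞) := by
  induction n with
  | zero => exact lenFin_nil ρ
  | succ n ih => rw [Finset.sum_range_succ, ← ih, seg_succ, lenFin_concat]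

theorem lenInf_eq_iSup_lenFin_seg (ρ : List ℕ → ℝ≥0) (f : ℕ → ℕ) :
    lenInf ρ f = ⨆ n, lenFin ρ (seg f n) := by
  simp only [lenInf, ENNReal.tsum_eq_iSup_nat, lenFin_seg]

variable (T : PTree)

theorem exists_child_infinite_descendants {S : Set (List ℕ)} (hS : ∀ l ∈ S, T.mem l)
    {l : List ℕ} (hl : T.mem l) (hinf : {l' ∈ S | l <+: l'}.Infinite) :
    ∃ a, T.mem (l ++ [a]) ∧ {l' ∈ S | l ++ [a] <+: l'}.Infinite := by
  by_contra! hfin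
  refine hinf ((((T.finite_children hl).biUnion hfin).insert l).subset ?_)
  rintro _ ⟨hl'S, t, rfl⟩
  rcases t with _ | ⟨b, t⟩
  · simp
  · have hpre : l ++ [b] <+: l ++ b :: t := ⟨t, by simp⟩
    exact Set.mem_insert_of_mem _ <|
      Set.mem_biUnion (T.prefix_closed hpre (hS _ hl'S)) ⟨hl'S, hpre⟩

/-- Kőnig's lemma. -/
theorem exists_mem_GammaInf_forall_infinite {S : Set (List ℕ)} (hS : ∀ l ∈ S, T.mem l)
    (hinf : S.Infinite) :
    ∃ f ∈ T.GammaInf, ∀ n, {l' ∈ S | seg f n <+: l'}.Infinite := by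
  let P : List ℕ → Prop := fun l => T.mem l ∧ {l' ∈ S | l <+: l'}.Infinite
  have hroot : P [] := ⟨T.root_mem, by simpa using hinf⟩
  choose! child hchild using fun l (hl : P l) => T.exists_child_infinite_descendants hS hl.1 hl.2
  let node : ℕ → List ℕ := fun n => (fun l => l ++ [child l])^[n] []
  have hnode (n : ℕ) : P (node n) := by
    induction n with
    | zero => exact hroot
    | succ n ih => simpa only [node, Function.iterate_succ_apply'] using hchild _ ih
  have hseg (n : ℕ) : seg (fun k => child (node k)) n = node n := by
    induction n with
    | zero => rfl
    | succ n ih => simp only [seg_succ, ih, node, Function.iterate_succ_apply']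
  exact ⟨fun k => child (node k), fun n => hseg n ▸ (hnode n).1, fun n => hseg n ▸ (hnode n).2⟩

theorem finite_setOf_lenFin_lt {ρ : List ℕ → ℝ≥0} (hρ : ρ ∈ T.AdmInf) {c : ℝ≥0∞} (hc : c < 1) :
    {l | T.mem l ∧ lenFin ρ l < c}.Finite := by
  by_contra hinf
  obtain ⟨f, hf, hdesc⟩ := T.exists_mem_GammaInf_forall_infinite (fun l hl => hl.1) hinf
  have hlen : lenInf ρ f ≤ c := by
    rw [lenInf_eq_iSup_lenFin_seg]
    refine iSup_le fun n => ?_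
    obtain ⟨l, ⟨-, hl⟩, hpre⟩ := (hdesc n).nonempty
    exact ((lenFin_mono ρ hpre).trans_lt hl).le
  exact ((hρ f hf).trans hlen).not_gt hc

abbrev Shell (n : ℕ) : Type := {l : List ℕ // T.mem l ∧ l.length = n}

theorem exists_forall_shell_le_lenFin {ρ : List ℕ → ℝ≥0} (hρ : ρ ∈ T.AdmInf) {c : ℝ≥0∞}
    (hc : c < 1) : ∃ n, ∀ l : T.Shell (n + 1), c ≤ lenFin ρ l.1 := by
  obtain ⟨N, hN⟩ := ((T.finite_setOf_lenFin_lt hρ hc).image List.length).bddAbove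
  refine ⟨N, fun l => not_lt.1 fun hl => ?_⟩
  have := hN ⟨l.1, ⟨l.2.1, hl⟩, rfl⟩
  have := l.2.2
  omega

theorem ne_nil_of_mem_shell_succ {n : ℕ} (l : T.Shell (n + 1)) : l.1 ≠ [] := by
  intro h
  simpa [h] using l.2.2

noncomputable def shellSuccEquiv (n : ℕ) :
    (Σ l : T.Shell n, {a : ℕ // T.mem (l.1 ++ [a])}) ≃ T.Shell (n + 1) :=
  Equiv.ofBijective (fun x => ⟨x.1.1 ++ [x.2.1], x.2.2, by simp [x.1.2.2]⟩) <| by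
    constructor
    · rintro ⟨⟨l₁, h₁⟩, ⟨a₁, ha₁⟩⟩ ⟨⟨l₂, h₂⟩, ⟨a₂, ha₂⟩⟩ h
      have h' : l₁ ++ [a₁] = l₂ ++ [a₂] := congrArg Subtype.val h
      obtain ⟨rfl, rfl⟩ : l₁ = l₂ ∧ a₁ = a₂ := by simpa using h'
      rfl
    · intro l
      have hne := T.ne_nil_of_mem_shell_succ l
      refine ⟨⟨⟨l.1.dropLast, T.prefix_closed (List.dropLast_prefix l.1) l.2.1, by
        simp [l.2.2]⟩, ⟨l.1.getLast hne, ?_⟩⟩, ?_⟩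
      · rw [List.dropLast_append_getLast hne]
        exact l.2.1
      · exact Subtype.ext (List.dropLast_append_getLast hne)

noncomputable def edgeEquiv : (Σ k : ℕ, T.Shell (k + 1)) ≃ T.Edge :=
  Equiv.ofBijective (fun x => ⟨x.2.1, x.2.2.1, T.ne_nil_of_mem_shell_succ x.2⟩) <| by
    constructor
    · rintro ⟨k₁, ⟨l, h₁⟩⟩ ⟨k₂, ⟨l₂, h₂⟩⟩ h
      obtain rfl : l = l₂ := congrArg Subtype.val h
      obtain rfl : k₁ = k₂ := by omega
      rfl
    · rintro ⟨l, hl, hne⟩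
      exact ⟨⟨l.length - 1, l, hl, by
        have := List.length_pos_iff.2 hne
        omega⟩, rfl⟩

theorem tsum_shell_succ (g : List ℕ → ℝ≥0∞) (n : ℕ) :
    ∑' l : T.Shell (n + 1), g l.1
      = ∑' l : T.Shell n, ∑' a : {a : ℕ // T.mem (l.1 ++ [a])}, g (l.1 ++ [a.1]) := by
  rw [← (T.shellSuccEquiv n).tsum_eq, ENNReal.tsum_sigma']
  rfl

theorem tsum_edge (g : List ℕ → ℝ≥0∞) :
    ∑' e : T.Edge, g e.1 = ∑' k : ℕ, ∑' l : T.Shell (k + 1), g l.1 := by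
  rw [← T.edgeEquiv.tsum_eq, ENNReal.tsum_sigma']
  rfl

section Flow

variable {T} {η : List ℕ → ℝ≥0} (hη : η ∈ T.Lambda)
include hη

theorem tsum_children_mul_lenFin (ρ : List ℕ → ℝ≥0) {n : ℕ} (l : T.Shell n) :
    ∑' a : {a : ℕ // T.mem (l.1 ++ [a])}, (η (l.1 ++ [a.1]) : ℝ≥0∞) * lenFin ρ l.1
      = η l.1 * lenFin ρ l.1 := by
  rcases eq_or_ne l.1 [] with hnil | hne
  · simp [hnil, lenFin_nil]
  · rw [ENNReal.tsum_mul_right, hη.2 l.1 l.2.1 hne]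

theorem tsum_shell_flow (n : ℕ) : ∑' l : T.Shell (n + 1), (η l.1 : ℝ≥0∞) = 1 := by
  induction n with
  | zero => exact hη.1
  | succ n ih =>
    rw [T.tsum_shell_succ (fun l => (η l : ℝ≥0∞)), ← ih]
    exact tsum_congr fun l => hη.2 l.1 l.2.1 (T.ne_nil_of_mem_shell_succ l)

theorem tsum_shell_mul_lenFin (ρ : List ℕ → ℝ≥0) (n : ℕ) :
    ∑' l : T.Shell n, (η l.1 : ℝ≥0∞) * lenFin ρ l.1
      = ∑ k ∈ Finset.range n, ∑' l : T.Shell (k + 1), (η l.1 : ℝ≥0∞) * ρ l.1 := by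
  induction n with
  | zero =>
    rw [Finset.sum_range_zero, ENNReal.tsum_eq_zero]
    intro l
    rw [List.length_eq_zero_iff.1 l.2.2, lenFin_nil, mul_zero]
  | succ n ih =>
    rw [Finset.sum_range_succ, ← ih, T.tsum_shell_succ (fun l => η l * lenFin ρ l),
      T.tsum_shell_succ (fun l => η l * ρ l), ← ENNReal.tsum_add]
    refine tsum_congr fun l => ?_
    simp only [lenFin_concat, mul_add]
    rw [ENNReal.tsum_add, tsum_children_mul_lenFin hη]

theorem one_le_tsum_mul_of_mem_AdmInf {ρ : List ℕ → ℝ≥0} (hρ : ρ ∈ T.AdmInf) :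
    1 ≤ ∑' e : T.Edge, (η e.1 : ℝ≥0∞) * ρ e.1 := by
  refine le_of_forall_lt_imp_le_of_dense fun c hc => ?_
  obtain ⟨n, hn⟩ := T.exists_forall_shell_le_lenFin hρ hc
  calc c = ∑' l : T.Shell (n + 1), c * η l.1 := by
        rw [ENNReal.tsum_mul_left, tsum_shell_flow hη, mul_one]
    _ ≤ ∑' l : T.Shell (n + 1), (η l.1 : ℝ≥0∞) * lenFin ρ l.1 :=
        ENNReal.tsum_le_tsum fun l => by rw [mul_comm]; gcongr; exact hn l
    _ = ∑ k ∈ Finset.range (n + 1), ∑' l : T.Shell (k + 1), (η l.1 : ℝ≥0∞) * ρ l.1 :=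
        tsum_shell_mul_lenFin hη ρ (n + 1)
    _ ≤ ∑' k : ℕ, ∑' l : T.Shell (k + 1), (η l.1 : ℝ≥0∞) * ρ l.1 := ENNReal.sum_le_tsum _
    _ = ∑' e : T.Edge, (η e.1 : ℝ≥0∞) * ρ e.1 := (T.tsum_edge fun l => η l * ρ l).symm

variable {σ : List ℕ → ℝ≥0} (hσ : ∀ e : List ℕ, 0 < σ e)
include hσ

theorem rpow_tsum_le_ModInf {p q : ℝ} (hpq : p.HolderConjugate q) :
    (∑' e : T.Edge, (σ e.1 : ℝ≥0∞) ^ (-(q / p)) * (η e.1 : ℝ≥0∞) ^ q) ^ (-(p / q))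
      ≤ T.ModInf p σ := by
  refine le_iInf₂ fun ρ hρ => ENNReal.rpow_neg_le_of_one_le_rpow_mul_rpow hpq ?_
  have hσp (e : List ℕ) : (σ e : ℝ≥0∞) ^ (1 / p) ≠ 0 :=
    (ENNReal.rpow_pos (ENNReal.coe_pos.2 (hσ e)) ENNReal.coe_ne_top).ne'
  have hσp' (e : List ℕ) : (σ e : ℝ≥0∞) ^ (1 / p) ≠ ∞ :=
    ENNReal.rpow_ne_top_of_nonneg (by positivity [hpq.pos]) ENNReal.coe_ne_top
  calc 1 ≤ ∑' e : T.Edge, (η e.1 : ℝ≥0∞) * ρ e.1 := one_le_tsum_mul_of_mem_AdmInf hη hρ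
    _ = ∑' e : T.Edge, (σ e.1 : ℝ≥0∞) ^ (1 / p) * ρ e.1 * ((σ e.1 : ℝ≥0∞) ^ (-(1 / p)) * η e.1) :=
        tsum_congr fun e => by
          rw [ENNReal.rpow_neg, ← ENNReal.mul_eq_mul_mul_inv_mul (hσp e.1) (hσp' e.1)]
    _ ≤ _ := ENNReal.tsum_mul_le_Lp_mul_Lq _ _ hpq
    _ = _ := by
      congr 3 <;> ext e
      · rw [ENNReal.mul_rpow_of_nonneg _ _ hpq.nonneg, ← ENNReal.rpow_mul,
          one_div_mul_cancel hpq.ne_zero, ENNReal.rpow_one]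
      · rw [ENNReal.mul_rpow_of_nonneg _ _ hpq.symm.nonneg, ← ENNReal.rpow_mul]
        ring_nf

theorem inv_iSup_le_ModInf_one :
    (⨆ e : T.Edge, (σ e.1 : ℝ≥0∞)⁻¹ * (η e.1 : ℝ≥0∞))⁻¹ ≤ T.ModInf 1 σ := by
  refine le_iInf₂ fun ρ hρ => ENNReal.inv_le_of_one_le_mul ?_
  calc 1 ≤ ∑' e : T.Edge, (η e.1 : ℝ≥0∞) * ρ e.1 := one_le_tsum_mul_of_mem_AdmInf hη hρ
    _ = ∑' e : T.Edge, (σ e.1 : ℝ≥0∞) * ρ e.1 * ((σ e.1 : ℝ≥0∞)⁻¹ * η e.1) :=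
        tsum_congr fun e => ENNReal.mul_eq_mul_mul_inv_mul
          (ENNReal.coe_ne_zero.2 (hσ e.1).ne') ENNReal.coe_ne_top _ _
    _ ≤ ∑' e : T.Edge, (σ e.1 : ℝ≥0∞) * ρ e.1 *
          ⨆ e' : T.Edge, (σ e'.1 : ℝ≥0∞)⁻¹ * (η e'.1 : ℝ≥0∞) :=
        ENNReal.tsum_le_tsum fun e => by
          gcongr
          exact le_iSup (fun e' : T.Edge => (σ e'.1 : ℝ≥0∞)⁻¹ * (η e'.1 : ℝ≥0∞)) e
    _ = _ := by simp [ENNReal.tsum_mul_right, energy, mul_comm]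

theorem inv_tsum_le_ModTop :
    (∑' e : T.Edge, (σ e.1 : ℝ≥0∞)⁻¹ * (η e.1 : ℝ≥0∞))⁻¹ ≤ T.ModTop σ := by
  refine le_iInf₂ fun ρ hρ => ENNReal.inv_le_of_one_le_mul ?_
  calc 1 ≤ ∑' e : T.Edge, (η e.1 : ℝ≥0∞) * ρ e.1 := one_le_tsum_mul_of_mem_AdmInf hη hρ
    _ = ∑' e : T.Edge, (σ e.1 : ℝ≥0∞)⁻¹ * η e.1 * ((σ e.1 : ℝ≥0∞) * ρ e.1) :=
        tsum_congr fun e => (ENNReal.mul_eq_mul_mul_inv_mul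
          (ENNReal.coe_ne_zero.2 (hσ e.1).ne') ENNReal.coe_ne_top _ _).trans (mul_comm _ _)
    _ ≤ ∑' e : T.Edge, (σ e.1 : ℝ≥0∞)⁻¹ * η e.1 * T.energyTop σ ρ :=
        ENNReal.tsum_le_tsum fun e => by
          gcongr; exact le_iSup (fun e' : T.Edge => (σ e'.1 : ℝ≥0∞) * ρ e'.1) e
    _ = _ := ENNReal.tsum_mul_right

end Flow

end PTree

/-- lower bounds for the `p`-modulus coming from `η ∈ Λ`, for
`p ∈ (1,∞)`, `p = 1` and `p = ∞`. -/
theorem stmt7 (T : PTree) (σ : List ℕ → ℝ≥0) (hσ : ∀ e : List ℕ, 0 < σ e)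
    (η : List ℕ → ℝ≥0) (hη : η ∈ T.Lambda) :
    (∀ p q : ℝ, 1 < p → 1 / p + 1 / q = 1 →
      (∑' e : T.Edge, (σ e.1 : ℝ≥0∞) ^ (-(q / p)) * (η e.1 : ℝ≥0∞) ^ q) ^ (-(p / q))
        ≤ T.ModInf p σ) ∧
    ((⨆ e : T.Edge, (σ e.1 : ℝ≥0∞)⁻¹ * (η e.1 : ℝ≥0∞))⁻¹ ≤ T.ModInf 1 σ) ∧
    ((∑' e : T.Edge, (σ e.1 : ℝ≥0∞)⁻¹ * (η e.1 : ℝ≥0∞))⁻¹ ≤ T.ModTop σ) := by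
  refine ⟨fun p q hp hpq => ?_, PTree.inv_iSup_le_ModInf_one hη hσ,
    PTree.inv_tsum_le_ModTop hη hσ⟩
  have hpq' : p.HolderConjugate q :=
    Real.holderConjugate_iff.2 ⟨hp, by simpa only [one_div] using hpq⟩
  exact PTree.rpow_tsum_le_ModInf hη hσ hpq'
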